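/- Fix 0 < μ < v̄. Let prices satisfy 0 < v₁ ≤ v₂ ≤ μ and let x₁ ∈ [0, 1], x₂ = 1 − x₁. Then the competitive ratio of the 2-level mechanism posting v₁ with probability x₁ and v₂ with probability x₂ over the mean ambiguity set, i.e., inf_{F ∈ 𝓕_mean} ( v₁x₁F([v₁, v̄]) + v₂x₂F([v₂, v̄]) ) / OPT(F), equals min{ (v₁x₁ + v₂x₂)/v̄, (μ − v₁)(v₁x₁ + v₂x₂)/(v₁(v̄ − v₁)), (μ − v₂)x₂/(v̄ − v₂) + v₁x₁/v₂ }. -/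

import Mathlib

open MeasureTheory Set

noncomputable section

/-- Hindsight optimal revenue: `OPT(F) = sup_{p ∈ [0, v̄]} p · F([p, v̄])`. -/
def hindsightOpt (vbar : ℝ) (F : Measure ℝ) : ℝ :=
  ⨆ p : Icc (0 : ℝ) vbar, (p : ℝ) * (F (Icc (p : ℝ) vbar)).toReal

/-- The mean ambiguity set: probability measures on `[0, v̄]` with mean at least `μ`. -/
def Fmean (μ vbar : ℝ) : Set (Measure ℝ) :=
  {F | IsProbabilityMeasure F ∧ F (Icc (0 : ℝ) vbar) = 1 ∧ μ ≤ ∫ t, t ∂F}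

/-- Competitive ratio over the mean ambiguity set of the 2-level mechanism posting `v1` with
probability `x1` and `v2` with probability `1 - x1`. -/
def twoLevelCRmean (μ vbar v1 v2 x1 : ℝ) : ℝ :=
  ⨅ F : ↥(Fmean μ vbar),
    (v1 * x1 * (F.1 (Icc v1 vbar)).toReal + v2 * (1 - x1) * (F.1 (Icc v2 vbar)).toReal) /
      hindsightOpt vbar F.1

open Filter Topology

/-!
For the upper bound, put mass `q = (μ - c) / (v̄ - c)` on `v̄` and the rest on a point `c ≤ μ`:
the mean is exactly `μ` and `OPT = max c (v̄ q)`, while a price above `c` sells only with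
probability `q`. Letting `c` increase to `v₁` gives `min (S / v̄) ((μ - v₁) S / (v₁ (v̄ - v₁)))`
with `S = v₁x₁ + v₂x₂`; letting `c` increase to `v₂` gives the third term whenever it is not
already above `S / v̄`.

For the lower bound write `Gᵢ = F([vᵢ, v̄])`. The mean constraint becomes the linear inequality
`μ ≤ v₁ + (v₂ - v₁) G₁ + (v̄ - v₂) G₂`, and `OPT(F) ≤ max v₁ (max (v₂ G₁) (v̄ G₂))`, because a
price below `v₁`, in `[v₁, v₂)` or in `[v₂, v̄]` sells with probability at most `1`, `G₁`, `G₂`.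
The revenue `v₁x₁G₁ + v₂x₂G₂` is linear in `(G₁, G₂)`, and explicit Farkas certificates show
that it dominates `m` times each term of that maximum whenever `m` is at most the claimed value.
-/

lemma le_of_forall_Ioo_le_of_continuousAt {α β : Type*} [TopologicalSpace α] [LinearOrder α]
    [OrderTopology α] [DenselyOrdered α] [TopologicalSpace β] [Preorder β]
    [ClosedIciTopology β] {f : α → β} {a b : α} {y : β} (hab : a < b) (hf : ContinuousAt f b)
    (h : ∀ c ∈ Ioo a b, y ≤ f c) : y ≤ f b :=
  have : (𝓝[<] b).NeBot := nhdsLT_neBot_of_exists_lt ⟨a, hab⟩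
  ge_of_tendsto (hf.tendsto.mono_left nhdsWithin_le_nhds)
    (eventually_of_mem (Ioo_mem_nhdsLT hab) h)

lemma div_max_eq_min_div {α : Type*} [Field α] [LinearOrder α] [IsStrictOrderedRing α]
    {a b c : α} (ha : 0 ≤ a) (hb : 0 < b) (hc : 0 < c) :
    a / max b c = min (a / b) (a / c) := by
  rcases le_total b c with h | h
  · rw [max_eq_right h, min_eq_right (div_le_div_of_nonneg_left ha hb h)]
  · rw [max_eq_left h, min_eq_left (div_le_div_of_nonneg_left ha hc h)]

lemma div_sub_mem_Icc {μ vbar c : ℝ} (hcμ : c ≤ μ) (hμv : μ < vbar) :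
    (μ - c) / (vbar - c) ∈ Icc 0 1 :=
  ⟨div_nonneg (by linarith) (by linarith), (div_le_one (by linarith)).2 (by linarith)⟩

section hindsightOpt

variable {vbar : ℝ} (F : Measure ℝ)

lemma hindsightOpt_nonneg : 0 ≤ hindsightOpt vbar F :=
  Real.iSup_nonneg fun p => mul_nonneg p.2.1 ENNReal.toReal_nonneg

lemma hindsightOpt_le {M : ℝ} (hvbar : 0 ≤ vbar)
    (h : ∀ p ∈ Icc 0 vbar, p * (F (Icc p vbar)).toReal ≤ M) : hindsightOpt vbar F ≤ M :=
  have : Nonempty (Icc (0 : ℝ) vbar) := (nonempty_Icc.2 hvbar).to_subtype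
  ciSup_le fun p => h p p.2

lemma le_hindsightOpt [IsFiniteMeasure F] {p : ℝ} (hp : p ∈ Icc 0 vbar) :
    p * (F (Icc p vbar)).toReal ≤ hindsightOpt vbar F := by
  refine le_ciSup (f := fun p : Icc (0 : ℝ) vbar => (p : ℝ) * (F (Icc (p : ℝ) vbar)).toReal)
    ⟨vbar * (F univ).toReal, forall_mem_range.2 fun q => ?_⟩ ⟨p, hp⟩
  exact mul_le_mul q.2.2 (ENNReal.toReal_mono (measure_ne_top F _) (measure_mono (subset_univ _)))
    ENNReal.toReal_nonneg (q.2.1.trans q.2.2)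

lemma hindsightOpt_le_max [IsProbabilityMeasure F] {v1 v2 : ℝ} (hv1 : 0 ≤ v1) (h12 : v1 ≤ v2)
    (h2v : v2 ≤ vbar) :
    hindsightOpt vbar F ≤
      max v1 (max (v2 * (F (Icc v1 vbar)).toReal) (vbar * (F (Icc v2 vbar)).toReal)) := by
  refine hindsightOpt_le F (hv1.trans (h12.trans h2v)) fun p hp => ?_
  have htail : ∀ {r}, r ≤ p → (F (Icc p vbar)).toReal ≤ (F (Icc r vbar)).toReal := fun h =>
    ENNReal.toReal_mono (measure_ne_top F _) (measure_mono (Icc_subset_Icc_left h))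
  rcases lt_or_ge p v1 with hp1 | hp1
  · have h1 : (F (Icc p vbar)).toReal ≤ 1 := measureReal_le_one
    exact le_max_of_le_left (by nlinarith [hp.1])
  rcases lt_or_ge p v2 with hp2 | hp2
  · exact le_max_of_le_right (le_max_of_le_left
      (mul_le_mul hp2.le (htail hp1) ENNReal.toReal_nonneg (hv1.trans h12)))
  · exact le_max_of_le_right (le_max_of_le_right
      (mul_le_mul hp.2 (htail hp2) ENNReal.toReal_nonneg (hv1.trans (h12.trans h2v))))

end hindsightOpt

def twoLevelRevenue (vbar v1 v2 x1 : ℝ) (F : Measure ℝ) : ℝ :=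
  v1 * x1 * (F (Icc v1 vbar)).toReal + v2 * (1 - x1) * (F (Icc v2 vbar)).toReal

section twoLevelRevenue

variable {vbar v1 v2 x1 : ℝ} (F : Measure ℝ)

lemma twoLevelRevenue_nonneg (hv1 : 0 ≤ v1) (hv2 : 0 ≤ v2) (hx0 : 0 ≤ x1) (hx1 : x1 ≤ 1) :
    0 ≤ twoLevelRevenue vbar v1 v2 x1 F := by
  have : 0 ≤ 1 - x1 := sub_nonneg.2 hx1
  unfold twoLevelRevenue
  positivity

lemma twoLevelRevenue_le_hindsightOpt [IsFiniteMeasure F] (hv1 : v1 ∈ Icc 0 vbar)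
    (hv2 : v2 ∈ Icc 0 vbar) (hx0 : 0 ≤ x1) (hx1 : x1 ≤ 1) :
    twoLevelRevenue vbar v1 v2 x1 F ≤ hindsightOpt vbar F := by
  have h1 := le_hindsightOpt F hv1
  have h2 := le_hindsightOpt F hv2
  unfold twoLevelRevenue
  nlinarith

lemma twoLevelCRmean_le {μ : ℝ} {F : Measure ℝ} (hF : F ∈ Fmean μ vbar) (hv1 : 0 ≤ v1)
    (hv2 : 0 ≤ v2) (hx0 : 0 ≤ x1) (hx1 : x1 ≤ 1) :
    twoLevelCRmean μ vbar v1 v2 x1 ≤ twoLevelRevenue vbar v1 v2 x1 F / hindsightOpt vbar F :=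
  ciInf_le (f := fun F : Fmean μ vbar => twoLevelRevenue vbar v1 v2 x1 F / hindsightOpt vbar F)
    ⟨0, forall_mem_range.2 fun G => div_nonneg (twoLevelRevenue_nonneg G.1 hv1 hv2 hx0 hx1)
      (hindsightOpt_nonneg G.1)⟩ ⟨F, hF⟩

end twoLevelRevenue

def twoPoint (q a b : ℝ) : Measure ℝ :=
  ENNReal.ofReal q • Measure.dirac a + ENNReal.ofReal (1 - q) • Measure.dirac b

section twoPoint

variable {q a b : ℝ}

lemma isProbabilityMeasure_twoPoint (hq0 : 0 ≤ q) (hq1 : q ≤ 1) :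
    IsProbabilityMeasure (twoPoint q a b) :=
  ⟨by simp [twoPoint, ← ENNReal.ofReal_add hq0 (sub_nonneg.2 hq1)]⟩

lemma integral_id_twoPoint (hq0 : 0 ≤ q) (hq1 : q ≤ 1) :
    ∫ t, t ∂twoPoint q a b = q * a + (1 - q) * b := by
  rw [twoPoint, integral_add_measure, integral_smul_measure, integral_smul_measure,
    integral_dirac, integral_dirac, ENNReal.toReal_ofReal hq0,
    ENNReal.toReal_ofReal (sub_nonneg.2 hq1), smul_eq_mul, smul_eq_mul]
  all_goals exact (integrable_dirac (by simp)).smul_measure ENNReal.ofReal_ne_top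

lemma twoPoint_Icc_of_le (hq0 : 0 ≤ q) (hq1 : q ≤ 1) {p : ℝ} (hpb : p ≤ b) (hba : b ≤ a) :
    twoPoint q a b (Icc p a) = 1 := by
  simp [twoPoint, Measure.dirac_apply' _ measurableSet_Icc, hpb, hba, hpb.trans hba,
    ← ENNReal.ofReal_add hq0 (sub_nonneg.2 hq1)]

lemma twoPoint_Icc_of_lt (hq0 : 0 ≤ q) {p : ℝ} (hbp : b < p) (hpa : p ≤ a) :
    (twoPoint q a b (Icc p a)).toReal = q := by
  simp [twoPoint, Measure.dirac_apply' _ measurableSet_Icc, hbp.not_ge, hpa, hq0]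

lemma hindsightOpt_twoPoint (hq0 : 0 ≤ q) (hq1 : q ≤ 1) (hb : 0 ≤ b) (hba : b < a) :
    hindsightOpt a (twoPoint q a b) = max b (a * q) := by
  have := isProbabilityMeasure_twoPoint (a := a) (b := b) hq0 hq1
  refine le_antisymm (hindsightOpt_le _ (hb.trans hba.le) fun p hp => ?_) (max_le ?_ ?_)
  · rcases le_or_gt p b with hpb | hbp
    · simpa [twoPoint_Icc_of_le hq0 hq1 hpb hba.le] using le_max_of_le_left hpb
    · rw [twoPoint_Icc_of_lt hq0 hbp hp.2]
      exact le_max_of_le_right (mul_le_mul_of_nonneg_right hp.2 hq0)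
  · simpa [twoPoint_Icc_of_le hq0 hq1 le_rfl hba.le] using
      le_hindsightOpt (twoPoint q a b) ⟨hb, hba.le⟩
  · have := le_hindsightOpt (twoPoint q a b) ⟨hb.trans hba.le, le_rfl⟩
    rwa [twoPoint_Icc_of_lt hq0 hba le_rfl] at this

lemma twoPoint_mem_Fmean {μ vbar c : ℝ} (hc : 0 ≤ c) (hcμ : c ≤ μ) (hμv : μ < vbar) :
    twoPoint ((μ - c) / (vbar - c)) vbar c ∈ Fmean μ vbar := by
  obtain ⟨hq0, hq1⟩ := div_sub_mem_Icc hcμ hμv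
  refine ⟨isProbabilityMeasure_twoPoint hq0 hq1,
    twoPoint_Icc_of_le hq0 hq1 hc (hcμ.trans hμv.le), ?_⟩
  rw [integral_id_twoPoint hq0 hq1]
  refine le_of_eq ?_
  field_simp [(by linarith : vbar - c ≠ 0)]
  ring

end twoPoint

section upperBound

variable {μ vbar v1 v2 x1 : ℝ} (hμv : μ < vbar) (hv1 : 0 < v1) (h12 : v1 ≤ v2) (h2μ : v2 ≤ μ)
  (hx0 : 0 ≤ x1) (hx1 : x1 ≤ 1)
include hμv hv1 h12 h2μ hx0 hx1

lemma twoLevelCRmean_le_of_lt_left {c : ℝ} (hc : 0 ≤ c) (hc1 : c < v1) :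
    twoLevelCRmean μ vbar v1 v2 x1 ≤
      (v1 * x1 + v2 * (1 - x1)) * ((μ - c) / (vbar - c)) /
        max c (vbar * ((μ - c) / (vbar - c))) := by
  obtain ⟨hq0, hq1⟩ := div_sub_mem_Icc (by linarith : c ≤ μ) hμv
  refine (twoLevelCRmean_le (twoPoint_mem_Fmean hc (by linarith) hμv) hv1.le (by linarith)
    hx0 hx1).trans_eq ?_
  rw [twoLevelRevenue, hindsightOpt_twoPoint hq0 hq1 hc (by linarith),
    twoPoint_Icc_of_lt hq0 hc1 (by linarith), twoPoint_Icc_of_lt hq0 (by linarith) (by linarith)]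
  ring

omit h12 in
lemma twoLevelCRmean_le_of_mem_Ico {c : ℝ} (hc : c ∈ Ico v1 v2) :
    twoLevelCRmean μ vbar v1 v2 x1 ≤
      (v1 * x1 + v2 * (1 - x1) * ((μ - c) / (vbar - c))) /
        max c (vbar * ((μ - c) / (vbar - c))) := by
  obtain ⟨hc1, hc2⟩ := hc
  obtain ⟨hq0, hq1⟩ := div_sub_mem_Icc (by linarith : c ≤ μ) hμv
  refine (twoLevelCRmean_le (twoPoint_mem_Fmean (hv1.le.trans hc1) (by linarith) hμv)
    hv1.le (by linarith) hx0 hx1).trans_eq ?_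
  rw [twoLevelRevenue, hindsightOpt_twoPoint hq0 hq1 (by linarith) (by linarith),
    twoPoint_Icc_of_le hq0 hq1 hc1 (by linarith), ENNReal.toReal_one,
    twoPoint_Icc_of_lt hq0 hc2 (by linarith)]
  ring

/- At `c = v₁` the revenue jumps up (`v₁` then sells with probability one), so the bound is
only reached as `c` increases to `v₁`. -/
lemma twoLevelCRmean_le_min_left :
    twoLevelCRmean μ vbar v1 v2 x1 ≤
      min ((v1 * x1 + v2 * (1 - x1)) / vbar)
        ((μ - v1) * (v1 * x1 + v2 * (1 - x1)) / (v1 * (vbar - v1))) := by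
  have hv1b : vbar - v1 ≠ 0 := by linarith
  have hlim := le_of_forall_Ioo_le_of_continuousAt hv1
    (f := fun c => (v1 * x1 + v2 * (1 - x1)) * ((μ - c) / (vbar - c)) /
      max c (vbar * ((μ - c) / (vbar - c))))
    (by fun_prop (disch := first | exact hv1b | exact (lt_max_of_lt_left hv1).ne'))
    fun c hc => twoLevelCRmean_le_of_lt_left hμv hv1 h12 h2μ hx0 hx1 hc.1.le hc.2
  refine hlim.trans_eq ?_
  have hS : 0 ≤ v1 * x1 + v2 * (1 - x1) := by nlinarith
  rcases (h12.trans h2μ).eq_or_lt with hμ | hμ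
  · simp [← hμ, div_nonneg hS (hv1.trans_le (h12.trans (h2μ.trans hμv.le))).le]
  · have hq : 0 < (μ - v1) / (vbar - v1) := div_pos (by linarith) (by linarith)
    rw [div_max_eq_min_div (mul_nonneg hS hq.le) hv1 (mul_pos (by linarith) hq), min_comm]
    congr 1
    · field_simp
    · field_simp

lemma twoLevelCRmean_le_right :
    twoLevelCRmean μ vbar v1 v2 x1 ≤ (μ - v2) * (1 - x1) / (vbar - v2) + v1 * x1 / v2 := by
  have hAB := twoLevelCRmean_le_min_left hμv hv1 h12 h2μ hx0 hx1
  have hv2 : 0 < v2 := hv1.trans_le h12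
  have hv2b : 0 < vbar - v2 := by linarith
  rcases h12.eq_or_lt with rfl | h12'
  · refine hAB.trans ((min_le_right _ _).trans ?_)
    rw [div_add_div _ _ hv2b.ne' hv1.ne', div_le_div_iff₀ (by positivity) (by positivity)]
    nlinarith [mul_nonneg (mul_nonneg hx0 (sub_nonneg.2 hμv.le))
      (mul_pos (mul_pos hv1 hv1) hv2b).le]
  have hlim := le_of_forall_Ioo_le_of_continuousAt h12'
    (f := fun c => (v1 * x1 + v2 * (1 - x1) * ((μ - c) / (vbar - c))) /
      max c (vbar * ((μ - c) / (vbar - c))))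
    (by fun_prop (disch := first | exact hv2b.ne' | exact (lt_max_of_lt_left hv2).ne'))
    fun c hc => twoLevelCRmean_le_of_mem_Ico hμv hv1 h2μ hx0 hx1 (Ioo_subset_Ico_self hc)
  rcases le_total (vbar * ((μ - v2) / (vbar - v2))) v2 with hm | hm
  · refine hlim.trans_eq ?_
    rw [max_eq_left hm]
    field_simp
    ring
  · refine hAB.trans ((min_le_left _ _).trans ?_)
    rw [mul_div_assoc', le_div_iff₀ hv2b] at hm
    have h1 : v1 * x1 / vbar ≤ v1 * x1 / v2 :=
      div_le_div_of_nonneg_left (by positivity) hv2 (by linarith)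
    have h2 : v2 * (1 - x1) / vbar ≤ (μ - v2) * (1 - x1) / (vbar - v2) := by
      rw [div_le_div_iff₀ (by linarith) hv2b]
      nlinarith [mul_le_mul_of_nonneg_right hm (sub_nonneg.2 hx1)]
    rw [add_div]
    linarith

end upperBound

lemma integral_id_le_of_ae_mem_Icc {F : Measure ℝ} [IsProbabilityMeasure F] {a b vbar : ℝ}
    (hF : ∀ᵐ t ∂F, t ∈ Icc 0 vbar) (hab : a ≤ b) :
    ∫ t, t ∂F ≤ a + (b - a) * (F (Icc a vbar)).toReal + (vbar - b) * (F (Icc b vbar)).toReal := by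
  set g₁ := (Icc a vbar).indicator fun _ => b - a
  set g₂ := (Icc b vbar).indicator fun _ => vbar - b
  have hg₁ : Integrable g₁ F := (integrable_const _).indicator measurableSet_Icc
  have hg₂ : Integrable g₂ F := (integrable_const _).indicator measurableSet_Icc
  have hpt : ∀ t ∈ Icc 0 vbar, t ≤ a + g₁ t + g₂ t := by
    intro t ht
    by_cases hta : a ≤ t <;> by_cases htb : b ≤ t <;> simp [g₁, g₂, hta, htb, ht.2] <;>
      linarith
  calc ∫ t, t ∂F ≤ ∫ t, (a + g₁ t + g₂ t) ∂F :=
        integral_mono_of_nonneg (hF.mono fun t ht => ht.1)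
          (((integrable_const a).add hg₁).add hg₂) (hF.mono hpt)
    _ = _ := by
        rw [integral_add (f := fun t => a + g₁ t) ((integrable_const a).add hg₁) hg₂,
          integral_add (integrable_const a) hg₁, integral_const,
          integral_indicator_const _ measurableSet_Icc,
          integral_indicator_const _ measurableSet_Icc]
        simp [measureReal_def, mul_comm]

section revenueBounds

variable {μ vbar v1 v2 x1 m G1 G2 : ℝ} (hμv : μ < vbar) (hv1 : 0 < v1) (h12 : v1 ≤ v2)
  (h2μ : v2 ≤ μ) (hx1 : x1 ≤ 1) (hm : 0 ≤ m) (hG21 : G2 ≤ G1) (hG1 : G1 ≤ 1)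
  (hmean : μ ≤ v1 + (v2 - v1) * G1 + (vbar - v2) * G2)
  (hC : m * ((vbar - v2) * v2) ≤ (μ - v2) * (1 - x1) * v2 + (vbar - v2) * (v1 * x1))
include hμv hv1 h12 h2μ hx1 hm hG21 hG1 hmean hC

/- Farkas certificates: after multiplying by `(v̄ - μ)(v̄ - v₂)`, the gap is the slack of `G₁ ≤ 1`
times that of one bound on `m`, plus `(v̄ - v₁) G₁ - (μ - v₁) ≥ 0` times that of the third bound,
plus `(v̄ - μ) v₂ x₂` times the slack of the mean constraint. -/
lemma mul_v1_le_revenue (hB : m * (v1 * (vbar - v1)) ≤ (μ - v1) * (v1 * x1 + v2 * (1 - x1))) :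
    m * v1 ≤ v1 * x1 * G1 + v2 * (1 - x1) * G2 := by
  have h2v : 0 < vbar - v2 := by linarith
  have hG1' : 0 ≤ (vbar - v1) * G1 - (μ - v1) := by
    linear_combination hmean + mul_le_mul_of_nonneg_left hG21 h2v.le
  have hC' : m * ((vbar - v2) * v1) ≤ m * ((vbar - v2) * v2) := by gcongr
  refine le_of_mul_le_mul_left ?_ (mul_pos (sub_pos.2 hμv) h2v)
  linear_combination mul_le_mul_of_nonneg_left hB (mul_nonneg (sub_nonneg.2 hG1) h2v.le) +
    mul_le_mul_of_nonneg_left (hC.trans' hC') hG1' +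
    mul_le_mul_of_nonneg_left hmean
      (mul_nonneg (sub_nonneg.2 hμv.le) (mul_nonneg (hv1.le.trans h12) (sub_nonneg.2 hx1)))

lemma mul_v2_le_revenue (hA : m * vbar ≤ v1 * x1 + v2 * (1 - x1)) :
    m * (v2 * G1) ≤ v1 * x1 * G1 + v2 * (1 - x1) * G2 := by
  have h2v : 0 < vbar - v2 := by linarith
  have hG1' : 0 ≤ (vbar - v1) * G1 - (μ - v1) := by
    linear_combination hmean + mul_le_mul_of_nonneg_left hG21 h2v.le
  have hA' : m * v2 ≤ v1 * x1 + v2 * (1 - x1) := by nlinarith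
  refine le_of_mul_le_mul_left ?_ (mul_pos (sub_pos.2 hμv) h2v)
  linear_combination mul_le_mul_of_nonneg_left hA'
      (mul_nonneg (sub_nonneg.2 hG1) (mul_nonneg (sub_nonneg.2 (h12.trans h2μ)) h2v.le)) +
    mul_le_mul_of_nonneg_left hC hG1' +
    mul_le_mul_of_nonneg_left hmean
      (mul_nonneg (sub_nonneg.2 hμv.le) (mul_nonneg (hv1.le.trans h12) (sub_nonneg.2 hx1)))

end revenueBounds

lemma le_twoLevelRevenue_div {μ vbar v1 v2 x1 m : ℝ} (hμv : μ < vbar) (hv1 : 0 < v1)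
    (h12 : v1 ≤ v2) (h2μ : v2 ≤ μ) (hx0 : 0 ≤ x1) (hx1 : x1 ≤ 1) {F : Measure ℝ}
    (hF : F ∈ Fmean μ vbar) (hmA : m ≤ (v1 * x1 + v2 * (1 - x1)) / vbar)
    (hmB : m ≤ (μ - v1) * (v1 * x1 + v2 * (1 - x1)) / (v1 * (vbar - v1)))
    (hmC : m ≤ (μ - v2) * (1 - x1) / (vbar - v2) + v1 * x1 / v2) :
    m ≤ twoLevelRevenue vbar v1 v2 x1 F / hindsightOpt vbar F := by
  obtain ⟨hP, hsupp, hmeanF⟩ := hF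
  have hv2 : 0 < v2 := hv1.trans_le h12
  have h2v : v2 < vbar := h2μ.trans_lt hμv
  rcases le_or_gt m 0 with hm | hm
  · exact hm.trans (div_nonneg (twoLevelRevenue_nonneg F hv1.le hv2.le hx0 hx1)
      (hindsightOpt_nonneg F))
  set G1 := (F (Icc v1 vbar)).toReal
  set G2 := (F (Icc v2 vbar)).toReal
  have hG2 : 0 ≤ G2 := ENNReal.toReal_nonneg
  have hG21 : G2 ≤ G1 :=
    ENNReal.toReal_mono (measure_ne_top F _) (measure_mono (Icc_subset_Icc_left h12))
  have hae : ∀ᵐ t ∂F, t ∈ Icc 0 vbar :=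
    mem_ae_iff.2 ((prob_compl_eq_zero_iff measurableSet_Icc).2 hsupp)
  have hmean : μ ≤ v1 + (v2 - v1) * G1 + (vbar - v2) * G2 :=
    hmeanF.trans (integral_id_le_of_ae_mem_Icc hae h12)
  rw [le_div_iff₀ (by linarith)] at hmA
  rw [le_div_iff₀ (mul_pos hv1 (by linarith))] at hmB
  rw [div_add_div _ _ (by linarith) hv2.ne', le_div_iff₀ (mul_pos (by linarith) hv2)] at hmC
  have hrev : m * max v1 (max (v2 * G1) (vbar * G2)) ≤ twoLevelRevenue vbar v1 v2 x1 F := by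
    rw [twoLevelRevenue, mul_max_of_nonneg _ _ hm.le, mul_max_of_nonneg _ _ hm.le]
    refine max_le (mul_v1_le_revenue hμv hv1 h12 h2μ hx1 hm.le hG21 measureReal_le_one hmean
      hmC hmB) (max_le (mul_v2_le_revenue hμv hv1 h12 h2μ hx1 hm.le hG21 measureReal_le_one
      hmean hmC hmA) ?_)
    nlinarith [mul_le_mul_of_nonneg_right hmA hG2,
      mul_nonneg (mul_nonneg hv1.le hx0) (sub_nonneg.2 hG21)]
  have hopt : 0 < hindsightOpt vbar F :=
    (mul_pos hm hv1).trans_le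
      (((mul_le_mul_of_nonneg_left (le_max_left _ _) hm.le).trans hrev).trans
        (twoLevelRevenue_le_hindsightOpt F ⟨hv1.le, by linarith⟩ ⟨hv2.le, h2v.le⟩ hx0 hx1))
  rw [le_div_iff₀ hopt]
  exact (mul_le_mul_of_nonneg_left (hindsightOpt_le_max F hv1.le h12 h2v.le) hm.le).trans hrev

theorem stmt8_general (μ vbar : ℝ) (hμv : μ < vbar)
    (v1 v2 x1 : ℝ) (hv1 : 0 < v1) (h12 : v1 ≤ v2) (h2μ : v2 ≤ μ)
    (hx0 : 0 ≤ x1) (hx1 : x1 ≤ 1) :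
    twoLevelCRmean μ vbar v1 v2 x1 =
      min (min ((v1 * x1 + v2 * (1 - x1)) / vbar)
              ((μ - v1) * (v1 * x1 + v2 * (1 - x1)) / (v1 * (vbar - v1))))
          ((μ - v2) * (1 - x1) / (vbar - v2) + v1 * x1 / v2) := by
  have : Nonempty (Fmean μ vbar) := ⟨_, twoPoint_mem_Fmean hv1.le (h12.trans h2μ) hμv⟩
  refine le_antisymm (le_min (twoLevelCRmean_le_min_left hμv hv1 h12 h2μ hx0 hx1)
    (twoLevelCRmean_le_right hμv hv1 h12 h2μ hx0 hx1)) (le_ciInf fun F => ?_)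
  exact le_twoLevelRevenue_div hμv hv1 h12 h2μ hx0 hx1 F.2
    ((min_le_left _ _).trans (min_le_left _ _)) ((min_le_left _ _).trans (min_le_right _ _))
    (min_le_right _ _)

/-- For `0 < v₁ ≤ v₂ ≤ μ` and `x₁ ∈ [0,1]`, the competitive ratio of the 2-level mechanism
over the mean ambiguity set equals the minimum of the three displayed quantities. -/
theorem stmt8 (μ vbar : ℝ) (hμ : 0 < μ) (hμv : μ < vbar)
    (v1 v2 x1 : ℝ) (hv1 : 0 < v1) (h12 : v1 ≤ v2) (h2μ : v2 ≤ μ)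
    (hx0 : 0 ≤ x1) (hx1 : x1 ≤ 1) :
    twoLevelCRmean μ vbar v1 v2 x1 =
      min (min ((v1 * x1 + v2 * (1 - x1)) / vbar)
              ((μ - v1) * (v1 * x1 + v2 * (1 - x1)) / (v1 * (vbar - v1))))
          ((μ - v2) * (1 - x1) / (vbar - v2) + v1 * x1 / v2) :=
  stmt8_general μ vbar hμv v1 v2 x1 hv1 h12 h2μ hx0 hx1
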